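/- arXiv:1210.0514 — 5 statements merged into one kernel-verified Lean document; each statement's English description precedes it below -/
import Mathlib

section
/- For every graph G and every positive integer k, the k-rainbow domination number of G equals the domination number of the Cartesian product of G with the complete graph K_k, i.e., γ_rk(G) = γ(G □ K_k). -/
open Finset

def SimpleGraph.lexProd {α β : Type*} (G : SimpleGraph α) (H : SimpleGraph β) :
    SimpleGraph (α × β) where
  Adj x y := G.Adj x.1 y.1 ∨ (x.1 = y.1 ∧ H.Adj x.2 y.2)
  symm := by
    constructor
    intro x y h
    rcases h with h | ⟨e, h⟩
    · exact Or.inl h.symm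
    · exact Or.inr ⟨e.symm, h.symm⟩
  loopless := by
    constructor
    intro x h
    rcases h with h | ⟨_, h⟩
    · exact G.irrefl h
    · exact H.irrefl h

/-- `f` is a `k`-rainbow dominating function of `G`. -/
def IsRDF {α : Type*} (G : SimpleGraph α) (k : ℕ) (f : α → Finset (Fin k)) : Prop :=
  ∀ v, f v = ∅ → ∀ i : Fin k, ∃ u, G.Adj u v ∧ i ∈ f u

/-- weight of a labeling -/
def rdWeight {α : Type*} [Fintype α] {k : ℕ} (f : α → Finset (Fin k)) : ℕ :=
  ∑ v, (f v).card

/-- the `k`-rainbow domination number -/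
noncomputable def rdNum {α : Type*} (G : SimpleGraph α) [Fintype α] (k : ℕ) : ℕ :=
  sInf {n | ∃ f : α → Finset (Fin k), IsRDF G k f ∧ rdWeight f = n}

/-- `D` is a dominating set of `G` -/
def IsDom {α : Type*} (G : SimpleGraph α) (D : Set α) : Prop :=
  ∀ v, v ∈ D ∨ ∃ u ∈ D, G.Adj u v

/-- `D` is a total dominating set of `G` -/
def IsTotalDom {α : Type*} (G : SimpleGraph α) (D : Set α) : Prop :=
  ∀ v, ∃ u ∈ D, G.Adj u v

/-- the domination number -/
noncomputable def domNum {α : Type*} (G : SimpleGraph α) [Fintype α] : ℕ :=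
  sInf {n | ∃ D : Finset α, IsDom G ↑D ∧ D.card = n}

/-- the total domination number -/
noncomputable def totalDomNum {α : Type*} (G : SimpleGraph α) [Fintype α] : ℕ :=
  sInf {n | ∃ D : Finset α, IsTotalDom G ↑D ∧ D.card = n}

/-- `(A, B)` is a dominating couple of `G` -/
def IsDomCouple {α : Type*} [DecidableEq α] (G : SimpleGraph α) (A B : Finset α) : Prop :=
  Disjoint A B ∧ ∀ x, x ∉ B → ∃ w ∈ A ∪ B, G.Adj w x

/-!
The map `f ↦ {(v, i) | i ∈ f v}` is a weight-preserving bijection between labelings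
`α → Finset (Fin k)` and vertex sets of `G □ K_k`, and it turns rainbow domination into
domination: a vertex `v` with `f v = ∅` needs, for each colour `i`, a `G`-neighbour carrying `i`,
which is exactly a neighbour of `(v, i)` in the `i`-th copy of `G`; a vertex with `f v ≠ ∅`
dominates its whole copy `{v} × K_k`.
-/

section

variable {α : Type*} [Fintype α] {k : ℕ}

def labelSet (f : α → Finset (Fin k)) : Finset (α × Fin k) :=
  univ.filter fun p => p.2 ∈ f p.1

@[simp]
lemma mem_labelSet {f : α → Finset (Fin k)} {p : α × Fin k} :
    p ∈ labelSet f ↔ p.2 ∈ f p.1 := by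
  simp [labelSet]

lemma card_labelSet (f : α → Finset (Fin k)) :
    (labelSet f).card = rdWeight f := by
  simp only [labelSet, card_filter, Fintype.sum_prod_type, rdWeight]
  refine sum_congr rfl fun v _ => ?_
  simp

lemma labelSet_surjective :
    Function.Surjective (labelSet : (α → Finset (Fin k)) → Finset (α × Fin k)) := by
  classical
  exact fun D => ⟨fun v => univ.filter fun i => (v, i) ∈ D, by ext; simp⟩

lemma isRDF_iff_isDom_labelSet (G : SimpleGraph α) (f : α → Finset (Fin k)) :
    IsRDF G k f ↔ IsDom (G □ (⊤ : SimpleGraph (Fin k))) ↑(labelSet f) := by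
  constructor
  · rintro hf ⟨v, i⟩
    by_cases hi : i ∈ f v
    · exact Or.inl (by simpa using hi)
    right
    obtain hv | ⟨j, hj⟩ := (f v).eq_empty_or_nonempty
    · obtain ⟨u, hadj, hu⟩ := hf v hv i
      exact ⟨(u, i), by simpa using hu, by simp [hadj]⟩
    · exact ⟨(v, j), by simpa using hj, by simp [ne_of_mem_of_not_mem hj hi]⟩
  · intro hD v hv i
    have hempty : ∀ j, j ∉ f v := by simp [hv]
    obtain hvi | ⟨⟨u, j⟩, hu, hadj⟩ := hD (v, i)
    · exact absurd (by simpa using hvi) (hempty i)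
    simp only [SimpleGraph.boxProd_adj, SimpleGraph.top_adj] at hadj
    obtain ⟨hadj, rfl⟩ | ⟨-, rfl⟩ := hadj
    · exact ⟨u, hadj, by simpa using hu⟩
    · exact absurd (by simpa using hu) (hempty j)

end

theorem stmt0_general {α : Type*} [Fintype α] (G : SimpleGraph α) (k : ℕ) :
    rdNum G k = domNum (G.boxProd (⊤ : SimpleGraph (Fin k))) := by
  unfold rdNum domNum
  congr 1
  ext n
  constructor
  · rintro ⟨f, hf, rfl⟩
    exact ⟨labelSet f, (isRDF_iff_isDom_labelSet G f).1 hf, card_labelSet f⟩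
  · rintro ⟨D, hD, rfl⟩
    obtain ⟨f, rfl⟩ := labelSet_surjective D
    exact ⟨f, (isRDF_iff_isDom_labelSet G f).2 hD, (card_labelSet f).symm⟩

theorem stmt0 {α : Type*} [Fintype α] (G : SimpleGraph α) (k : ℕ) (hk : 0 < k) :
    rdNum G k = domNum (G.boxProd (⊤ : SimpleGraph (Fin k))) :=
  stmt0_general G k
end

section
/- If G is any finite graph and k ≥ 2 is an integer, then min{|V(G)|, γ(G)+k−2} ≤ γ_rk(G) ≤ k·γ(G). -/
/-!
Labelling a minimum dominating set with all `k` colours gives a `k`-rainbow dominating function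
of weight `k γ(G)`.

Conversely, let `f` be a `k`-rainbow dominating function. If no vertex is labelled `∅`, its weight
is at least `|V(G)|`. Otherwise pick `v` with `f v = ∅` and a colour `i`: the vertex `v`, the
labelled non-neighbours of `v`, and the neighbours of `v` whose label contains `i` form a
dominating set. Since all `k` colours occur on `N(v)`, the labels on `N(v)` have total size at
least `|{u ∈ N(v) | i ∈ f u}| + k - 1`, so this dominating set has at most `w(f) - k + 2`
vertices.
-/

open Finset

section Counting

variable {ι β : Type*}

lemma card_filter_ne_empty_le_sum_card [DecidableEq β] (s : Finset ι) (f : ι → Finset β) :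
    #{u ∈ s | f u ≠ ∅} ≤ ∑ u ∈ s, #(f u) := by
  rw [card_filter]
  refine sum_le_sum fun u _ => ?_
  split_ifs with h
  · exact card_pos.2 (nonempty_iff_ne_empty.2 h)
  · exact Nat.zero_le _

lemma card_filter_mem_add_card_sub_one_le_sum_card [Fintype β] [DecidableEq β]
    (s : Finset ι) (f : ι → Finset β) (hcover : ∀ b, ∃ u ∈ s, b ∈ f u) (b₀ : β) :
    #{u ∈ s | b₀ ∈ f u} + (Fintype.card β - 1) ≤ ∑ u ∈ s, #(f u) := by
  have hdouble : ∑ u ∈ s, #(f u) = ∑ b, #{u ∈ s | b ∈ f u} := by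
    simpa [bipartiteAbove, bipartiteBelow] using
      sum_card_bipartiteAbove_eq_sum_card_bipartiteBelow (s := s) (t := univ)
        (r := fun u b => b ∈ f u)
  have hothers : #(univ.erase b₀) ≤ ∑ b ∈ univ.erase b₀, #{u ∈ s | b ∈ f u} := by
    rw [card_eq_sum_ones]
    refine sum_le_sum fun b _ => ?_
    obtain ⟨u, hu, hb⟩ := hcover b
    exact card_pos.2 ⟨u, mem_filter.2 ⟨hu, hb⟩⟩
  rw [hdouble, ← add_sum_erase _ _ (mem_univ b₀)]
  rw [card_erase_of_mem (mem_univ b₀), card_univ] at hothers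
  omega

end Counting

lemma isRDF_const_univ {α : Type*} (G : SimpleGraph α) (k : ℕ) : IsRDF G k fun _ => univ :=
  fun _ hv i => (notMem_empty i (hv ▸ mem_univ i)).elim

section DominationNumbers

variable {α : Type*} [Fintype α] (G : SimpleGraph α)

lemma isDom_univ : IsDom G ↑(univ : Finset α) := fun v => Or.inl (by simp)

lemma domNum_le_card {D : Finset α} (hD : IsDom G ↑D) : domNum G ≤ #D :=
  Nat.sInf_le ⟨D, hD, rfl⟩

lemma exists_isDom_card_eq_domNum : ∃ D : Finset α, IsDom G ↑D ∧ #D = domNum G :=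
  Nat.sInf_mem (s := {n | ∃ D : Finset α, IsDom G ↑D ∧ #D = n}) ⟨_, univ, isDom_univ G, rfl⟩

lemma rdNum_le_rdWeight {k : ℕ} {f : α → Finset (Fin k)} (hf : IsRDF G k f) :
    rdNum G k ≤ rdWeight f :=
  Nat.sInf_le ⟨f, hf, rfl⟩

lemma exists_isRDF_rdWeight_eq_rdNum (k : ℕ) :
    ∃ f : α → Finset (Fin k), IsRDF G k f ∧ rdWeight f = rdNum G k :=
  Nat.sInf_mem (s := {n | ∃ f : α → Finset (Fin k), IsRDF G k f ∧ rdWeight f = n})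
    ⟨_, _, isRDF_const_univ G k, rfl⟩

end DominationNumbers

lemma IsDom.isRDF_ite {α : Type*} [DecidableEq α] {G : SimpleGraph α} {D : Finset α}
    (hD : IsDom G ↑D) (k : ℕ) : IsRDF G k fun v => if v ∈ D then univ else ∅ := by
  intro v hv i
  obtain h | ⟨u, hu, hadj⟩ := hD v
  · simp only [mem_coe.1 h, if_true] at hv
    exact (notMem_empty i (hv ▸ mem_univ i)).elim
  · exact ⟨u, hadj, by simp [mem_coe.1 hu]⟩

lemma rdWeight_ite {α : Type*} [Fintype α] [DecidableEq α] (D : Finset α) (k : ℕ) :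
    rdWeight (fun v => if v ∈ D then (univ : Finset (Fin k)) else ∅) = k * #D := by
  simp [rdWeight, apply_ite card, sum_ite_mem, mul_comm]

lemma rdNum_le_mul_domNum {α : Type*} [Fintype α] (G : SimpleGraph α) (k : ℕ) :
    rdNum G k ≤ k * domNum G := by
  classical
  obtain ⟨D, hD, hcard⟩ := exists_isDom_card_eq_domNum G
  calc rdNum G k ≤ rdWeight (fun v => if v ∈ D then (univ : Finset (Fin k)) else ∅) :=
        rdNum_le_rdWeight G (hD.isRDF_ite k)
    _ = k * domNum G := by rw [rdWeight_ite, hcard]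

section LowerBound

variable {α : Type*} [Fintype α] [DecidableEq α] {G : SimpleGraph α} [DecidableRel G.Adj]
  {k : ℕ} {f : α → Finset (Fin k)}

variable (G f) in
def rdDomSet (v : α) (i : Fin k) : Finset α :=
  insert v (({u | ¬G.Adj u v ∧ f u ≠ ∅} : Finset α) ∪ ({u | G.Adj u v ∧ i ∈ f u} : Finset α))

lemma IsRDF.isDom_rdDomSet (hf : IsRDF G k f) (v : α) (i : Fin k) :
    IsDom G ↑(rdDomSet G f v i) := by
  unfold rdDomSet
  intro x
  by_cases hxv : x = v
  · exact Or.inl (by simp [hxv])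
  by_cases hadj : G.Adj x v
  · exact Or.inr ⟨v, by simp, hadj.symm⟩
  by_cases hfx : f x = ∅
  · obtain ⟨u, hux, hiu⟩ := hf x hfx i
    have hfu : f u ≠ ∅ := ne_empty_of_mem hiu
    exact Or.inr ⟨u, by by_cases huv : G.Adj u v <;> simp [huv, hfu, hiu], hux⟩
  · exact Or.inl (by simp [hadj, hfx])

variable (f) in
lemma card_rdDomSet_le (v : α) (i : Fin k) :
    #(rdDomSet G f v i) ≤ #{u | ¬G.Adj u v ∧ f u ≠ ∅} + #{u | G.Adj u v ∧ i ∈ f u} + 1 :=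
  (card_insert_le _ _).trans (Nat.add_le_add_right (card_union_le _ _) 1)

lemma IsRDF.domNum_add_le_rdWeight_add_two (hf : IsRDF G k f) (hk : 0 < k) {v : α}
    (hv : f v = ∅) : domNum G + k ≤ rdWeight f + 2 := by
  let i : Fin k := ⟨0, hk⟩
  have hdom := domNum_le_card G (hf.isDom_rdDomSet v i)
  have hcard := card_rdDomSet_le (G := G) f v i
  have hsplit := sum_filter_add_sum_filter_not univ (fun u => G.Adj u v) fun u => #(f u)
  have hfar := card_filter_ne_empty_le_sum_card ({u | ¬G.Adj u v} : Finset α) f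
  have hnear := card_filter_mem_add_card_sub_one_le_sum_card ({u | G.Adj u v} : Finset α) f
    (fun b => by simpa using hf v hv b) i
  simp only [filter_filter, Fintype.card_fin] at hfar hnear
  unfold rdWeight
  omega

lemma IsRDF.min_card_domNum_le_rdWeight (hf : IsRDF G k f) (hk : 0 < k) :
    min (Fintype.card α) (domNum G + k - 2) ≤ rdWeight f := by
  by_cases hempty : ∃ v, f v = ∅
  · obtain ⟨v, hv⟩ := hempty
    have := hf.domNum_add_le_rdWeight_add_two hk hv
    exact (min_le_right _ _).trans (by omega)
  · push Not at hempty
    refine (min_le_left _ _).trans ?_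
    have := card_filter_ne_empty_le_sum_card univ f
    rwa [filter_true_of_mem fun v _ => nonempty_iff_ne_empty.1 (hempty v), card_univ] at this

end LowerBound

theorem stmt1 {α : Type*} [Fintype α] (G : SimpleGraph α) (k : ℕ) (hk : 2 ≤ k) :
    min (Fintype.card α) (domNum G + k - 2) ≤ rdNum G k ∧ rdNum G k ≤ k * domNum G := by
  classical
  obtain ⟨f, hf, hweight⟩ := exists_isRDF_rdWeight_eq_rdNum G k
  exact ⟨hweight ▸ hf.min_card_domNum_le_rdWeight (by omega), rdNum_le_mul_domNum G k⟩
end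

section
/- Let G and H be non-trivial connected graphs with |V(H)| ≥ 3, and let f be a minimum-weight 2-rainbow dominating function of G ∘ H, inducing the partition (V_∅, V_1, V_2, V_{12}) of V(G∘H) by label. Then both π_G(V_1 ∪ V_{12}) and π_G(V_2 ∪ V_{12}) are dominating sets of G. -/
open Finset

/-!
If `g ∈ V(G)` is not dominated by `π_G(V_i ∪ V_{12})`, no label in the column `{g} × V(H)` or in
a neighbouring column contains `i`; hence no vertex of the column is labelled `∅`, since it would
need a neighbour carrying `i`. Pick `v ∈ V(H)` with two distinct neighbours `u`, `w` (possible as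
`H` is connected with at least three vertices) and relabel `(g, v)` by `{1, 2}` and `(g, u)`,
`(g, w)` by `∅`. Every vertex outside the column adjacent to `(g, u)` or `(g, w)` is adjacent to
`(g, v)` as well, so this is still a 2-rainbow dominating function, and its weight is smaller by at
least one, contradicting minimality.
-/

namespace SimpleGraph

variable {V : Type*} {G : SimpleGraph V}

theorem Connected.exists_adj_adj_ne [Fintype V] (hG : G.Connected) (hV : 3 ≤ Fintype.card V) :
    ∃ v u w, u ≠ w ∧ G.Adj v u ∧ G.Adj v w := by
  classical
  have : Nontrivial V := Fintype.one_lt_card_iff_nontrivial.mp (by omega)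
  obtain ⟨a⟩ := hG.nonempty
  obtain ⟨n, han⟩ := hG.preconnected.exists_adj_of_nontrivial a
  obtain ⟨c, -, hc⟩ := Finset.exists_mem_notMem_of_card_lt_card
    (s := {a, n}) (t := Finset.univ) (by grw [Finset.card_le_two]; simp; omega)
  obtain ⟨walk⟩ := hG.preconnected a c
  obtain ⟨d, -, hd_in, hd_out⟩ := walk.exists_boundary_dart {a, n} (by simp) (by simpa using hc)
  simp only [Set.mem_insert_iff, Set.mem_singleton_iff, not_or] at hd_in hd_out
  rcases hd_in with hfst | hfst
  · exact ⟨a, n, d.snd, Ne.symm hd_out.2, han, hfst ▸ d.adj⟩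
  · exact ⟨n, a, d.snd, Ne.symm hd_out.1, han.symm, hfst ▸ d.adj⟩

end SimpleGraph

section RainbowDomination

variable {V : Type*} {Γ : SimpleGraph V} {k : ℕ}

theorem IsRDF.rdNum_le [Fintype V] {f : V → Finset (Fin k)} (hf : IsRDF Γ k f) :
    rdNum Γ k ≤ rdWeight f :=
  Nat.sInf_le ⟨f, hf, rfl⟩

theorem rdWeight_update [Fintype V] [DecidableEq V] (f : V → Finset (Fin k)) (a : V)
    (s : Finset (Fin k)) : rdWeight (Function.update f a s) + (f a).card = rdWeight f + s.card := by
  have hcard : (fun v ↦ (Function.update f a s v).card) =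
      Function.update (fun v ↦ (f v).card) a s.card := by
    funext v
    exact Function.apply_update (fun _ ↦ Finset.card) f a s v
  rw [rdWeight, rdWeight, hcard, Finset.sum_update_of_mem (Finset.mem_univ a),
    Finset.sum_eq_add_sum_sdiff_singleton_of_mem (Finset.mem_univ a)]
  ring

def concentrate [DecidableEq V] (f : V → Finset (Fin k)) (v u w : V) : V → Finset (Fin k) :=
  Function.update (Function.update (Function.update f v Finset.univ) u ∅) w ∅

theorem isRDF_concentrate [DecidableEq V] {f : V → Finset (Fin k)} (hf : IsRDF Γ k f)
    {v u w : V} (hvu : Γ.Adj v u) (hvw : Γ.Adj v w)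
    (hcover : ∀ x, f x = ∅ → Γ.Adj u x ∨ Γ.Adj w x → Γ.Adj v x) :
    IsRDF Γ k (concentrate f v u w) := by
  have hFv : concentrate f v u w v = Finset.univ := by
    simp [concentrate, hvu.ne, hvw.ne]
  intro x hx c
  by_cases hxuw : x = u ∨ x = w
  · refine ⟨v, ?_, by simp [hFv]⟩
    rcases hxuw with rfl | rfl
    exacts [hvu, hvw]
  obtain ⟨hxu, hxw⟩ := not_or.mp hxuw
  have hxv : x ≠ v := by
    rintro rfl
    simp only [concentrate, Function.update_of_ne hxu, Function.update_of_ne hxw,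
      Function.update_self] at hx
    exact Finset.univ_nonempty_iff.mpr ⟨c⟩ |>.ne_empty hx
  have hfx : f x = ∅ := by
    simpa [concentrate, hxu, hxw, hxv] using hx
  obtain ⟨y, hyx, hcy⟩ := hf x hfx c
  by_cases hy : y = u ∨ y = w ∨ y = v
  · refine ⟨v, ?_, by simp [hFv]⟩
    rcases hy with rfl | rfl | rfl
    exacts [hcover x hfx (Or.inl hyx), hcover x hfx (Or.inr hyx), hyx]
  · push Not at hy
    exact ⟨y, hyx, by simpa [concentrate, hy.1, hy.2.1, hy.2.2] using hcy⟩

theorem rdWeight_concentrate [Fintype V] [DecidableEq V] (f : V → Finset (Fin k)) {v u w : V}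
    (huv : u ≠ v) (hwv : w ≠ v) (hwu : w ≠ u) :
    rdWeight (concentrate f v u w) + (f v).card + (f u).card + (f w).card = rdWeight f + k := by
  have h₁ := rdWeight_update f v Finset.univ
  have h₂ := rdWeight_update (Function.update f v Finset.univ) u ∅
  have h₃ := rdWeight_update (Function.update (Function.update f v Finset.univ) u ∅) w ∅
  simp only [Function.update_of_ne huv, Function.update_of_ne hwv, Function.update_of_ne hwu,
    Finset.card_univ, Fintype.card_fin, Finset.card_empty, add_zero] at h₁ h₂ h₃
  rw [concentrate]
  omega

end RainbowDomination

section LexProd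

variable {α β : Type*} {G : SimpleGraph α} {H : SimpleGraph β} {k : ℕ}

theorem IsRDF.lexProd_ne_empty {f : α × β → Finset (Fin k)} (hf : IsRDF (G.lexProd H) k f)
    {i : Fin k} {g : α} (hi : ∀ g', (g' = g ∨ G.Adj g' g) → ∀ b, i ∉ f (g', b)) (b : β) :
    f (g, b) ≠ ∅ := by
  intro hgb
  obtain ⟨⟨g', b'⟩, hadj, hmem⟩ := hf (g, b) hgb i
  rcases hadj with hadj | ⟨rfl, -⟩
  exacts [hi g' (Or.inr hadj) b' hmem, hi g' (Or.inl rfl) b' hmem]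

theorem IsRDF.rdNum_lexProd_lt [Fintype α] [Fintype β] [DecidableEq α] [DecidableEq β]
    {f : α × β → Finset (Fin k)} (hf : IsRDF (G.lexProd H) k f) (hk : k ≤ 2)
    {v u w : β} (huw : u ≠ w) (hvu : H.Adj v u) (hvw : H.Adj v w)
    {g : α} (hcol : ∀ b, f (g, b) ≠ ∅) :
    rdNum (G.lexProd H) k < rdWeight f := by
  have hcover : ∀ x, f x = ∅ → (G.lexProd H).Adj (g, u) x ∨ (G.lexProd H).Adj (g, w) x →
      (G.lexProd H).Adj (g, v) x := by
    rintro ⟨g', b⟩ hx hadj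
    obtain rfl | hg' := eq_or_ne g g'
    · exact absurd hx (hcol b)
    · left
      rcases hadj with hadj | hadj <;> simpa [SimpleGraph.lexProd, hg'] using hadj
  have hF := isRDF_concentrate hf (v := (g, v)) (u := (g, u)) (w := (g, w))
    (Or.inr ⟨rfl, hvu⟩) (Or.inr ⟨rfl, hvw⟩) hcover
  have hweight := rdWeight_concentrate f (v := (g, v)) (u := (g, u)) (w := (g, w))
    (by simpa using hvu.ne') (by simpa using hvw.ne') (by simpa using huw.symm)
  have hv := Finset.nonempty_iff_ne_empty.mpr (hcol v) |>.card_pos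
  have hu := Finset.nonempty_iff_ne_empty.mpr (hcol u) |>.card_pos
  have hw := Finset.nonempty_iff_ne_empty.mpr (hcol w) |>.card_pos
  have hle := hF.rdNum_le
  omega

theorem IsRDF.isDom_lexProd_of_rdWeight_eq_rdNum [Fintype α] [Fintype β]
    {f : α × β → Finset (Fin k)} (hf : IsRDF (G.lexProd H) k f)
    (hmin : rdWeight f = rdNum (G.lexProd H) k) (hk : k ≤ 2)
    (hHc : H.Connected) (hH : 3 ≤ Fintype.card β) (i : Fin k) :
    IsDom G {g : α | ∃ h : β, i ∈ f (g, h)} := by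
  classical
  by_contra hdom
  obtain ⟨g, hg, hg_adj⟩ : ∃ g, (∀ b, i ∉ f (g, b)) ∧ ∀ g' b, i ∈ f (g', b) → ¬G.Adj g' g := by
    simpa [IsDom] using hdom
  have hcol := hf.lexProd_ne_empty <| by
    rintro g' (rfl | hadj)
    exacts [hg, fun b hb ↦ hg_adj g' b hb hadj]
  obtain ⟨v, u, w, huw, hvu, hvw⟩ := hHc.exists_adj_adj_ne hH
  exact (hf.rdNum_lexProd_lt hk huw hvu hvw hcol).ne' hmin

end LexProd

theorem stmt7_general {α β : Type*} [Fintype α] [Fintype β]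
    (G : SimpleGraph α) (H : SimpleGraph β)
    (hHc : H.Connected)
    (hH : 3 ≤ Fintype.card β)
    (f : α × β → Finset (Fin 2))
    (hf : IsRDF (G.lexProd H) 2 f) (hmin : rdWeight f = rdNum (G.lexProd H) 2) :
    IsDom G {g : α | ∃ h : β, (0 : Fin 2) ∈ f (g, h)} ∧
      IsDom G {g : α | ∃ h : β, (1 : Fin 2) ∈ f (g, h)} :=
  ⟨hf.isDom_lexProd_of_rdWeight_eq_rdNum hmin le_rfl hHc hH 0,
    hf.isDom_lexProd_of_rdWeight_eq_rdNum hmin le_rfl hHc hH 1⟩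

theorem stmt7 {α β : Type*} [Fintype α] [Fintype β]
    (G : SimpleGraph α) (H : SimpleGraph β)
    (hGc : G.Connected) (hHc : H.Connected)
    (hG : Nontrivial α) (hH : 3 ≤ Fintype.card β)
    (f : α × β → Finset (Fin 2))
    (hf : IsRDF (G.lexProd H) 2 f) (hmin : rdWeight f = rdNum (G.lexProd H) 2) :
    IsDom G {g : α | ∃ h : β, (0 : Fin 2) ∈ f (g, h)} ∧
      IsDom G {g : α | ∃ h : β, (1 : Fin 2) ∈ f (g, h)} :=
  stmt7_general G H hHc hH f hf hmin
end

section
/- For every connected graph G and every non-trivial connected graph H, γ_r2(G ∘ H) ≥ 2γ(G). -/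
open Finset

/-!
Let `f` be a `k`-rainbow dominating function of `G ∘ H` with `k ≤ |V(H)|`, and for a vertex `g`
of `G` let `w g` be the weight of `f` on the fibre `{g} × V(H)`. For each colour `i`, the vertices
`g` with `k ≤ w g` or with `i` occurring on their fibre dominate `G`: if `g` is not among them, its
fibre is too light to be fully labelled, so some `(g, h)` gets no label, and the neighbour supplying
colour `i` to it must lie in another fibre, hence over a neighbour of `g` in `G`. Each `g` lies in at
most `w g` of these `k` sets, so `k γ(G) ≤ w(f)`.
-/

namespace SimpleGraph

variable {α β : Type*} [Fintype β] {k : ℕ}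

def fiberWeight (f : α × β → Finset (Fin k)) (g : α) : ℕ :=
  ∑ h, (f (g, h)).card

def fiberLabels (f : α × β → Finset (Fin k)) (g : α) : Finset (Fin k) :=
  univ.biUnion fun h => f (g, h)

lemma exists_eq_empty_of_fiberWeight_lt {f : α × β → Finset (Fin k)} {g : α}
    (hg : fiberWeight f g < Fintype.card β) : ∃ h, f (g, h) = ∅ := by
  by_contra! hne
  have : Fintype.card β ≤ fiberWeight f g := by
    simpa [fiberWeight] using
      sum_le_sum fun h (_ : h ∈ univ) => Nat.one_le_iff_ne_zero.mpr (card_ne_zero.mpr (hne h))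
  omega

lemma card_colors_le_fiberWeight (f : α × β → Finset (Fin k)) (g : α) :
    (univ.filter fun i => k ≤ fiberWeight f g ∨ i ∈ fiberLabels f g).card ≤ fiberWeight f g := by
  by_cases hheavy : k ≤ fiberWeight f g
  · exact (card_filter_le _ _).trans (by simpa using hheavy)
  · simp only [hheavy, false_or, filter_mem_eq_inter, univ_inter]
    exact card_biUnion_le

variable [Fintype α]

def colorProjection (f : α × β → Finset (Fin k)) (i : Fin k) : Finset α :=
  univ.filter fun g => k ≤ fiberWeight f g ∨ i ∈ fiberLabels f g

lemma isDom_colorProjection {G : SimpleGraph α} {H : SimpleGraph β}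
    {f : α × β → Finset (Fin k)} (hf : IsRDF (G.lexProd H) k f)
    (hk : k ≤ Fintype.card β) (i : Fin k) : IsDom G ↑(colorProjection f i) := by
  intro g
  by_cases hg : g ∈ colorProjection f i
  · exact Or.inl hg
  right
  simp only [colorProjection, mem_filter, mem_univ, true_and, not_or, not_le] at hg
  obtain ⟨hlight, hi⟩ := hg
  obtain ⟨h, hempty⟩ := exists_eq_empty_of_fiberWeight_lt (hlight.trans_le hk)
  obtain ⟨⟨g', h'⟩, hadj, hiu⟩ := hf (g, h) hempty i
  have hi' : i ∈ fiberLabels f g' := mem_biUnion.mpr ⟨h', mem_univ _, hiu⟩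
  rcases hadj with hadj | ⟨rfl, -⟩
  · exact ⟨g', by simp [colorProjection, hi'], hadj⟩
  · exact absurd hi' hi

lemma sum_card_colorProjection_le (f : α × β → Finset (Fin k)) :
    ∑ i, (colorProjection f i).card ≤ rdWeight f := by
  calc ∑ i, (colorProjection f i).card
      = ∑ g, (univ.filter fun i => k ≤ fiberWeight f g ∨ i ∈ fiberLabels f g).card := by
        simp only [colorProjection, card_filter]
        exact sum_comm
    _ ≤ ∑ g, fiberWeight f g := sum_le_sum fun g _ => card_colors_le_fiberWeight f g
    _ = rdWeight f := by rw [rdWeight, Fintype.sum_prod_type]; rfl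

lemma domNum_le_card {G : SimpleGraph α} {D : Finset α} (hD : IsDom G ↑D) :
    domNum G ≤ D.card :=
  Nat.sInf_le ⟨D, hD, rfl⟩

lemma exists_isRDF_rdWeight_eq_rdNum (G : SimpleGraph α) (k : ℕ) :
    ∃ f : α → Finset (Fin k), IsRDF G k f ∧ rdWeight f = rdNum G k :=
  Nat.sInf_mem (s := {n | ∃ f : α → Finset (Fin k), IsRDF G k f ∧ rdWeight f = n})
    ⟨_, fun _ => univ, fun _ hv i => absurd (hv ▸ mem_univ i) (notMem_empty i), rfl⟩

theorem mul_domNum_le_rdNum_lexProd (G : SimpleGraph α) (H : SimpleGraph β)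
    (hk : k ≤ Fintype.card β) : k * domNum G ≤ rdNum (G.lexProd H) k := by
  obtain ⟨f, hf, hfw⟩ := exists_isRDF_rdWeight_eq_rdNum (G.lexProd H) k
  calc k * domNum G = ∑ _i : Fin k, domNum G := by simp
    _ ≤ ∑ i, (colorProjection f i).card :=
        sum_le_sum fun i _ => domNum_le_card (isDom_colorProjection hf hk i)
    _ ≤ rdNum (G.lexProd H) k := hfw ▸ sum_card_colorProjection_le f

end SimpleGraph

theorem stmt9_general {α β : Type*} [Fintype α] [Fintype β]
    (G : SimpleGraph α) (H : SimpleGraph β)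
    (hH : Nontrivial β) :
    2 * domNum G ≤ rdNum (G.lexProd H) 2 :=
  G.mul_domNum_le_rdNum_lexProd H (Fintype.one_lt_card_iff_nontrivial.mpr hH)

theorem stmt9 {α β : Type*} [Fintype α] [Fintype β]
    (G : SimpleGraph α) (H : SimpleGraph β)
    (hGc : G.Connected) (hHc : H.Connected) (hH : Nontrivial β) :
    2 * domNum G ≤ rdNum (G.lexProd H) 2 :=
  stmt9_general G H hH
end

section
/- If G and H are non-trivial connected graphs and γ(G) = γ_t(G), then γ_r2(G ∘ H) = 2γ(G). -/
/-
For each colour `i` of a `k`-rainbow dominating function `f` of `G ∘ H`, the vertices `x` of `G` whose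
`H`-fibre either carries colour `i` or has no unlabelled vertex dominate `G`: an unlabelled `(x, b)` has to
see colour `i` along an edge of `G`, because the fibre over `x` does not contain it. A fibre lies in at most
`k` of these sets and weighs at least as many (for a fully labelled fibre because `|V(H)| ≥ k`), so
`k γ(G) ≤ γ_rk(G ∘ H)`. Conversely, labelling `D × {b}` by all `k` colours, for a total dominating set `D`
of `G`, gives `γ_rk(G ∘ H) ≤ k γ_t(G)`; when `γ = γ_t` the two bounds meet.
-/

open Finset

section Extremal

variable {α : Type*} [Fintype α] (G : SimpleGraph α)

lemma exists_isTotalDom_card_eq_totalDomNum (hG : ∀ v, ∃ u, G.Adj u v) :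
    ∃ D : Finset α, IsTotalDom G ↑D ∧ #D = totalDomNum G :=
  Nat.sInf_mem (s := {n | ∃ D : Finset α, IsTotalDom G ↑D ∧ #D = n})
    ⟨_, univ, fun v => (hG v).imp fun _ hu => ⟨mem_univ _, hu⟩, rfl⟩

lemma le_rdNum {k n : ℕ} (h : ∀ f, IsRDF G k f → n ≤ rdWeight f) : n ≤ rdNum G k :=
  le_csInf ⟨_, _, isRDF_const_univ G k, rfl⟩ (by rintro _ ⟨f, hf, rfl⟩; exact h f hf)

end Extremal

section LexProd

variable {α β : Type*} [Fintype α] [Fintype β] {G : SimpleGraph α} (H : SimpleGraph β) {k : ℕ}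

lemma rdNum_lexProd_le_mul_card [Nonempty β] {D : Finset α} (hD : IsTotalDom G ↑D) :
    rdNum (G.lexProd H) k ≤ k * #D := by
  classical
  obtain ⟨b₀⟩ := ‹Nonempty β›
  let f : α × β → Finset (Fin k) := fun p => if p ∈ D ×ˢ {b₀} then univ else ∅
  have hf : IsRDF (G.lexProd H) k f := fun v _ i => by
    obtain ⟨u, hu, huv⟩ := hD v.1
    exact ⟨(u, b₀), Or.inl huv, by simp [f, mem_coe.1 hu]⟩
  calc rdNum (G.lexProd H) k ≤ rdWeight f := rdNum_le_rdWeight _ hf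
    _ = k * #D := by
      simp only [rdWeight, f, apply_ite card, card_univ, Fintype.card_fin, card_empty,
        Fintype.sum_ite_mem, sum_const, card_product, card_singleton, smul_eq_mul, mul_one, mul_comm]

open Classical in
noncomputable def colourShadow (f : α × β → Finset (Fin k)) (i : Fin k) : Finset α :=
  {x | (∃ b, i ∈ f (x, b)) ∨ ∀ b, (f (x, b)).Nonempty}

lemma isDom_colourShadow {f : α × β → Finset (Fin k)} (hf : IsRDF (G.lexProd H) k f)
    (i : Fin k) : IsDom G ↑(colourShadow f i) := by
  intro x
  by_cases hx : x ∈ colourShadow f i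
  · exact .inl hx
  simp only [colourShadow, mem_filter, mem_univ, true_and, not_or, not_exists, not_forall,
    not_nonempty_iff_eq_empty] at hx
  obtain ⟨hi, b, hb⟩ := hx
  obtain ⟨⟨y, c⟩, hyx | ⟨rfl, -⟩, hyi⟩ := hf (x, b) hb i
  · exact .inr ⟨y, mem_coe.2 (mem_filter.2 ⟨mem_univ y, .inl ⟨c, hyi⟩⟩), hyx⟩
  · exact absurd hyi (hi c)

lemma card_filter_mem_colourShadow_le [DecidableEq α] (hk : k ≤ Fintype.card β)
    (f : α × β → Finset (Fin k)) (x : α) : #{i | x ∈ colourShadow f i} ≤ ∑ b, #(f (x, b)) := by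
  by_cases hall : ∀ b, (f (x, b)).Nonempty
  · calc #{i | x ∈ colourShadow f i} ≤ k := (card_filter_le _ _).trans_eq (card_fin k)
      _ ≤ ∑ _b : β, 1 := by simpa using hk
      _ ≤ ∑ b, #(f (x, b)) := sum_le_sum fun b _ => (hall b).card_pos
  · calc #{i | x ∈ colourShadow f i} ≤ #(univ.biUnion fun b => f (x, b)) := card_le_card ?_
      _ ≤ ∑ b, #(f (x, b)) := card_biUnion_le
    intro i
    simp [colourShadow, hall]

lemma mul_domNum_le_rdWeight (hk : k ≤ Fintype.card β) {f : α × β → Finset (Fin k)}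
    (hf : IsRDF (G.lexProd H) k f) : k * domNum G ≤ rdWeight f := by
  classical
  calc k * domNum G = ∑ _i : Fin k, domNum G := by simp
    _ ≤ ∑ i, #(colourShadow f i) :=
      sum_le_sum fun i _ => domNum_le_card G (isDom_colourShadow H hf i)
    _ = ∑ x, #{i | x ∈ colourShadow f i} := by
      simpa [bipartiteAbove, bipartiteBelow] using
        sum_card_bipartiteAbove_eq_sum_card_bipartiteBelow (s := univ) (t := univ)
          fun i x => x ∈ colourShadow f i
    _ ≤ ∑ x, ∑ b, #(f (x, b)) := sum_le_sum fun x _ => card_filter_mem_colourShadow_le hk f x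
    _ = rdWeight f := by rw [rdWeight, Fintype.sum_prod_type]

lemma mul_domNum_le_rdNum_lexProd (hk : k ≤ Fintype.card β) :
    k * domNum G ≤ rdNum (G.lexProd H) k :=
  le_rdNum _ fun _ hf => mul_domNum_le_rdWeight H hk hf

end LexProd

theorem stmt10_general {α β : Type*} [Fintype α] [Fintype β]
    (G : SimpleGraph α) (H : SimpleGraph β)
    (hGc : G.Connected) (hG : Nontrivial α) (hH : Nontrivial β)
    (heq : domNum G = totalDomNum G) :
    rdNum (G.lexProd H) 2 = 2 * domNum G := by
  obtain ⟨D, hD, hDcard⟩ := exists_isTotalDom_card_eq_totalDomNum G fun v =>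
    (hGc.preconnected.exists_adj_of_nontrivial v).imp fun _ h => h.symm
  refine le_antisymm ?_ (mul_domNum_le_rdNum_lexProd H Fintype.one_lt_card)
  calc rdNum (G.lexProd H) 2 ≤ 2 * #D := rdNum_lexProd_le_mul_card H hD
    _ = 2 * domNum G := by rw [hDcard, heq]

theorem stmt10 {α β : Type*} [Fintype α] [Fintype β]
    (G : SimpleGraph α) (H : SimpleGraph β)
    (hGc : G.Connected) (hHc : H.Connected) (hG : Nontrivial α) (hH : Nontrivial β)
    (heq : domNum G = totalDomNum G) :
    rdNum (G.lexProd H) 2 = 2 * domNum G :=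
  stmt10_general G H hGc hG hH heq
end
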